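/- arXiv:math-ph/0501067 — 5 statements merged into one kernel-verified Lean document; each statement's English description precedes it below -/
import Mathlib

section
/- Fix an integer q ≥ 2 and β ≥ 0. Let h < h', let x ∈ Δ_q be a global minimizer of Φ_{β,h}^{(q)} and let x' ∈ Δ_q be a global minimizer of Φ_{β,h'}^{(q)}. Then the first coordinates satisfy x₁ ≤ x₁'. -/
open Real Set

noncomputable section

/-- The probability simplex `Δ_q`. -/
def pottsSimplex (q : ℕ) : Set (Fin q → ℝ) :=
  {x | (∀ k, 0 ≤ x k) ∧ ∑ k, x k = 1}

/-- The mean-field free-energy function `Φ_{β,h}^{(q)}` of the `q`-state Potts model. -/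
noncomputable def pottsPhi (q : ℕ) [NeZero q] (β h : ℝ) (x : Fin q → ℝ) : ℝ :=
  (∑ k, (-(β / 2) * x k ^ 2 + x k * Real.log (x k))) - h * x 0

/-- `x` is a global minimizer of `Φ_{β,h}^{(q)}` on `Δ_q`. -/
def IsPottsMinimizer (q : ℕ) [NeZero q] (β h : ℝ) (x : Fin q → ℝ) : Prop :=
  x ∈ pottsSimplex q ∧ ∀ y ∈ pottsSimplex q, pottsPhi q β h x ≤ pottsPhi q β h y

/-- Monotonicity in `h` of the first coordinate of global minimizers (Lemma 5.2(1)). -/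
theorem potts_minimizer_mono_in_h (q : ℕ) [NeZero q] (hq : 2 ≤ q) (β : ℝ) (hβ : 0 ≤ β)
    (h h' : ℝ) (hlt : h < h') (x x' : Fin q → ℝ)
    (hx : IsPottsMinimizer q β h x) (hx' : IsPottsMinimizer q β h' x') :
    x 0 ≤ x' 0 := by
  have h1 := hx.2 x' hx'.1
  have h2 := hx'.2 x hx.1
  simp only [pottsPhi] at h1 h2
  nlinarith [h1, h2]
end
end

section
/- Fix an integer q ≥ 2 and β ≥ 0, and let x = (x₁,...,x_q) ∈ Δ_q be a global minimizer of Φ_{β,h}^{(q)}. If h > 0 then x₁ > max{x₂,...,x_q}. If h < 0 then x₁ < min{x₂,...,x_q}. -/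
/-!
Exchanging the coordinates `x₀` and `x_k` of a minimizer leaves the entropy and interaction terms
unchanged, so minimality gives `h x_k ≤ h x₀`. Equality `x_k = x₀ = a` is ruled out by moving a
little mass `ε` between the two coordinates: by concavity of `log`, the entropy and interaction
terms change by `O(ε² / a)` while the field term gains `|h| ε`. This needs `a > 0`, which holds
because `t log t` has infinite slope at `0`: moving mass `ε` onto a vanishing coordinate changes
`Φ` by `ε log ε + O(ε)`.
-/

open Real Set Filter Topology

noncomputable section

theorem Finset.sum_sub_sum_of_eq_of_ne_of_ne {ι M : Type*} [Fintype ι] [DecidableEq ι]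
    [AddCommGroup M] {f g : ι → M} {i j : ι} (hij : i ≠ j)
    (hfg : ∀ k, k ≠ i → k ≠ j → f k = g k) :
    ∑ k, f k - ∑ k, g k = (f i - g i) + (f j - g j) := by
  rw [← Finset.sum_sub_distrib, ← Finset.sum_pair hij (f := fun k => f k - g k)]
  refine (Finset.sum_subset (Finset.subset_univ _) fun k _ hk => ?_).symm
  simp only [Finset.mem_insert, Finset.mem_singleton, not_or] at hk
  rw [hfg k hk.1 hk.2, sub_self]

theorem Real.mul_log_le_mul_log_add {a t : ℝ} (ha : 0 < a) (ht : 0 ≤ t) :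
    t * log t ≤ t * log a + t * (t - a) / a := by
  rcases ht.eq_or_lt with rfl | ht
  · simp
  have hlog : log t - log a ≤ (t - a) / a := by
    rw [← log_div ht.ne' ha.ne', sub_div, div_self ha.ne']
    exact log_le_sub_one_of_pos (div_pos ht ha)
  have := mul_le_mul_of_nonneg_left hlog ht.le
  rw [mul_div_assoc]
  linarith

def pottsSite (β t : ℝ) : ℝ := -(β / 2) * t ^ 2 + t * log t

theorem pottsPhi_eq_sum_pottsSite (q : ℕ) [NeZero q] (β h : ℝ) (x : Fin q → ℝ) :
    pottsPhi q β h x = ∑ k, pottsSite β (x k) - h * x 0 := rfl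

theorem pottsSite_add_sub_le (β : ℝ) {a ε : ℝ} (ha : 0 < a) (hε : 0 ≤ ε) (hεa : ε ≤ a) :
    (pottsSite β (a + ε) - pottsSite β a) + (pottsSite β (a - ε) - pottsSite β a)
      ≤ (2 / a - β) * ε ^ 2 := by
  have hplus := mul_log_le_mul_log_add ha (t := a + ε) (by linarith)
  have hminus := mul_log_le_mul_log_add ha (t := a - ε) (by linarith)
  have hsum : (a + ε) * (a + ε - a) / a + (a - ε) * (a - ε - a) / a = 2 / a * ε ^ 2 := by
    field_simp
    ring
  unfold pottsSite
  linear_combination hplus + hminus + hsum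

theorem pottsSite_zero_add_sub_le (β : ℝ) {b ε : ℝ} (hb : 0 < b) (hε : 0 ≤ ε) (hεb : ε ≤ b) :
    (pottsSite β ε - pottsSite β 0) + (pottsSite β (b - ε) - pottsSite β b)
      ≤ ε * log (ε / b) + β * ε * (b - ε) := by
  have hminus := mul_log_le_mul_log_add hb (t := b - ε) (by linarith)
  have hquot : (b - ε) * (b - ε - b) / b ≤ 0 :=
    div_nonpos_of_nonpos_of_nonneg (mul_nonpos_of_nonneg_of_nonpos (by linarith) (by linarith))
      hb.le
  rcases hε.eq_or_lt with rfl | hε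
  · simp [pottsSite]
  rw [log_div hε.ne' hb.ne']
  unfold pottsSite
  linear_combination hminus + hquot

section MoveMass

variable {ι : Type*} [DecidableEq ι]

def moveMass (x : ι → ℝ) (i j : ι) (ε : ℝ) : ι → ℝ :=
  Function.update (Function.update x j (x j - ε)) i (x i + ε)

variable {x : ι → ℝ} {i j : ι} {ε : ℝ}

theorem moveMass_apply_left : moveMass x i j ε i = x i + ε :=
  Function.update_self ..

theorem moveMass_apply_right (hij : i ≠ j) : moveMass x i j ε j = x j - ε := by
  rw [moveMass, Function.update_of_ne hij.symm, Function.update_self]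

theorem moveMass_apply_of_ne {k : ι} (hki : k ≠ i) (hkj : k ≠ j) : moveMass x i j ε k = x k := by
  rw [moveMass, Function.update_of_ne hki, Function.update_of_ne hkj]

theorem abs_moveMass_sub_le (hij : i ≠ j) (hε : 0 ≤ ε) (k : ι) :
    |moveMass x i j ε k - x k| ≤ ε := by
  by_cases hki : k = i
  · subst hki
    simp [moveMass_apply_left, abs_of_nonneg hε]
  by_cases hkj : k = j
  · subst hkj
    simp [moveMass_apply_right hij, abs_of_nonneg hε]
  simp [moveMass_apply_of_ne hki hkj, hε]

theorem sum_comp_moveMass_sub [Fintype ι] (hij : i ≠ j) (g : ℝ → ℝ) :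
    ∑ k, g (moveMass x i j ε k) - ∑ k, g (x k) =
      (g (x i + ε) - g (x i)) + (g (x j - ε) - g (x j)) := by
  rw [Finset.sum_sub_sum_of_eq_of_ne_of_ne hij fun k hki hkj => by
    rw [moveMass_apply_of_ne hki hkj], moveMass_apply_left, moveMass_apply_right hij]

end MoveMass

theorem moveMass_mem_pottsSimplex {q : ℕ} {x : Fin q → ℝ} (hx : x ∈ pottsSimplex q) {i j : Fin q}
    (hij : i ≠ j) {ε : ℝ} (hε : 0 ≤ ε) (hεj : ε ≤ x j) : moveMass x i j ε ∈ pottsSimplex q := by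
  refine ⟨fun k => ?_, ?_⟩
  · have := abs_le.mp (abs_moveMass_sub_le (x := x) hij hε k)
    by_cases hkj : k = j
    · subst hkj
      rw [moveMass_apply_right hij]
      linarith
    by_cases hki : k = i
    · subst hki
      rw [moveMass_apply_left]
      linarith [hx.1 k]
    · rw [moveMass_apply_of_ne hki hkj]
      exact hx.1 k
  · have := sum_comp_moveMass_sub (x := x) (ε := ε) hij id
    simp only [id] at this
    linarith [hx.2]

namespace IsPottsMinimizer

variable {q : ℕ} [NeZero q] {β h : ℝ} {x : Fin q → ℝ}

theorem mul_moveMass_sub_le (hx : IsPottsMinimizer q β h x) {i j : Fin q} (hij : i ≠ j) {ε : ℝ}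
    (hε : 0 ≤ ε) (hεj : ε ≤ x j) :
    h * (moveMass x i j ε 0 - x 0) ≤
      (pottsSite β (x i + ε) - pottsSite β (x i)) +
        (pottsSite β (x j - ε) - pottsSite β (x j)) := by
  have hmin := hx.2 _ (moveMass_mem_pottsSimplex hx.1 hij hε hεj)
  rw [pottsPhi_eq_sum_pottsSite, pottsPhi_eq_sum_pottsSite] at hmin
  linarith [sum_comp_moveMass_sub (x := x) (ε := ε) hij (pottsSite β)]

theorem mul_apply_le_mul_apply_zero (hx : IsPottsMinimizer q β h x) (k : Fin q) :
    h * x k ≤ h * x 0 := by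
  have hmem : x ∘ Equiv.swap 0 k ∈ pottsSimplex q :=
    ⟨fun i => hx.1.1 _, by rw [← hx.1.2]; exact Equiv.sum_comp (Equiv.swap 0 k) x⟩
  have hmin := hx.2 _ hmem
  simp only [pottsPhi_eq_sum_pottsSite, Function.comp_apply, Equiv.swap_apply_left] at hmin
  rw [Equiv.sum_comp (Equiv.swap 0 k) (fun i => pottsSite β (x i))] at hmin
  linarith

theorem apply_pos (hx : IsPottsMinimizer q β h x) (i : Fin q) : 0 < x i := by
  refine (hx.1.1 i).lt_of_ne' fun hxi => ?_
  obtain ⟨j, hj⟩ : ∃ j, 0 < x j := by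
    by_contra! hnonpos
    have := Finset.sum_nonpos fun k (_ : k ∈ Finset.univ) => hnonpos k
    linarith [hx.1.2]
  have hij : i ≠ j := by
    rintro rfl
    linarith
  -- `ε log (ε / x j)` beats the first-order terms `|β| x j ε + |h| ε` for this `ε`.
  set ε := x j * exp (-(|β| * x j + |h| + 1))
  have hε : 0 < ε := by positivity
  have hεj : ε ≤ x j := mul_le_of_le_one_right hj.le (exp_le_one_iff.mpr (by
    have := abs_nonneg β; have := abs_nonneg h; nlinarith))
  have hlog : log (ε / x j) = -(|β| * x j + |h| + 1) := by
    rw [mul_div_cancel_left₀ _ hj.ne', log_exp]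
  have hfield : -(|h| * ε) ≤ h * (moveMass x i j ε 0 - x 0) := by
    refine (abs_le.mp ?_).1
    rw [abs_mul]
    exact mul_le_mul_of_nonneg_left (abs_moveMass_sub_le hij hε.le 0) (abs_nonneg h)
  have hinteraction : β * (x j - ε) ≤ |β| * x j :=
    (mul_le_mul_of_nonneg_right (le_abs_self β) (sub_nonneg.mpr hεj)).trans
      (mul_le_mul_of_nonneg_left (by linarith) (abs_nonneg β))
  have hmin := hx.mul_moveMass_sub_le hij hε.le hεj
  rw [hxi, zero_add] at hmin
  have hsite := pottsSite_zero_add_sub_le β hj hε.le hεj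
  rw [hlog] at hsite
  nlinarith [mul_le_mul_of_nonneg_left hinteraction hε.le]

theorem apply_ne_apply_zero (hx : IsPottsMinimizer q β h x) (hh : h ≠ 0) {k : Fin q}
    (hk : k ≠ 0) : x k ≠ x 0 := by
  intro hk0
  have ha := hx.apply_pos 0
  have hgain : ∀ ε, 0 ≤ ε → ε ≤ x 0 → |h| * ε ≤ (2 / x 0 - β) * ε ^ 2 := by
    intro ε hε hεa
    have hsite := pottsSite_add_sub_le β ha hε hεa
    have htoZero := hx.mul_moveMass_sub_le hk.symm hε (hk0 ▸ hεa)
    have hfromZero := hx.mul_moveMass_sub_le hk hε hεa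
    rw [moveMass_apply_left, hk0] at htoZero
    rw [moveMass_apply_right hk, hk0] at hfromZero
    rcases abs_cases h with ⟨habs, -⟩ | ⟨habs, -⟩ <;> rw [habs] <;> linarith
  have hlin : Tendsto (fun ε => (2 / x 0 - β) * ε) (𝓝[>] 0) (𝓝 0) :=
    ((continuous_const_mul _).tendsto' 0 0 (mul_zero _)).mono_left nhdsWithin_le_nhds
  obtain ⟨ε, hsmall, hε, hεa⟩ :=
    ((hlin.eventually (gt_mem_nhds (abs_pos.mpr hh))).and (Ioc_mem_nhdsGT ha)).exists
  nlinarith [hgain ε hε.le hεa]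

end IsPottsMinimizer

theorem potts_minimizer_field_sign_general (q : ℕ) [NeZero q] (β h : ℝ)
    (x : Fin q → ℝ) (hx : IsPottsMinimizer q β h x) :
    (0 < h → ∀ k : Fin q, k ≠ 0 → x k < x 0) ∧
    (h < 0 → ∀ k : Fin q, k ≠ 0 → x 0 < x k) := by
  refine ⟨fun hh k hk => ?_, fun hh k hk => ?_⟩
  · exact (le_of_mul_le_mul_left (hx.mul_apply_le_mul_apply_zero k) hh).lt_of_ne
      (hx.apply_ne_apply_zero hh.ne' hk)
  · exact ((mul_le_mul_left_of_neg hh).mp (hx.mul_apply_le_mul_apply_zero k)).lt_of_ne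
      (hx.apply_ne_apply_zero hh.ne hk).symm

/-- The first coordinate of a global minimizer strictly dominates (resp. is strictly
dominated by) all the others when `h > 0` (resp. `h < 0`) (Lemma 5.2(2)). -/
theorem potts_minimizer_field_sign (q : ℕ) [NeZero q] (hq : 2 ≤ q) (β h : ℝ) (hβ : 0 ≤ β)
    (x : Fin q → ℝ) (hx : IsPottsMinimizer q β h x) :
    (0 < h → ∀ k : Fin q, k ≠ 0 → x k < x 0) ∧
    (h < 0 → ∀ k : Fin q, k ≠ 0 → x 0 < x k) :=
  potts_minimizer_field_sign_general q β h x hx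
end
end

section
/- Let q ≥ 2 be an integer, β ≥ 0 and h < 0, and define g : [0, 1/(q−1)] → ℝ by g(θ) = (e^{βθ−h} − 1)/((q−1) e^{βθ−h} + 1). Then g is nondecreasing and concave on [0, 1/(q−1)], g(0) > 0, and g(θ) < 1 for all θ ∈ [0, 1/(q−1)]. In particular, the equation g(θ) = θ has exactly one solution in [0, 1/(q−1)]. -/
open Real Set

noncomputable section

/-- The fixed-point map `g(θ) = (e^{βθ-h}-1)/((q-1)e^{βθ-h}+1)` for the symmetric
minimizers of the `q`-state Potts mean-field free energy in a negative field. -/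
noncomputable def gNeg (q : ℕ) (β h θ : ℝ) : ℝ :=
  (Real.exp (β * θ - h) - 1) / (((q : ℝ) - 1) * Real.exp (β * θ - h) + 1)

/-!
With `E = e^{βθ-h}` and `a = q - 1`, `g = (E - 1)/(aE + 1)` is increasing in `E` and stays below
`1/a`. Its derivative is `qβ · E/(aE + 1)²`, and `x ↦ x/(ax + 1)²` decreases on `ax ≥ 1`; since
`E ≥ 1` for `θ ≥ 0`, `g'` decreases there and `g` is concave. As `g(0) > 0` and `g(1/a) < 1/a`,
`g - id` changes sign on `[0, 1/a]`; being concave and positive at `0`, it vanishes only once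
there.
-/

lemma ConcaveOn.eq_of_fixedPoints_Icc {g : ℝ → ℝ} {b : ℝ} (hg : ConcaveOn ℝ (Icc 0 b) g)
    (h0 : 0 < g 0) {u v : ℝ} (hu : u ∈ Icc 0 b) (hv : v ∈ Icc 0 b) (hgu : g u = u)
    (hgv : g v = v) : u = v := by
  have hf : ConcaveOn ℝ (Icc 0 b) (fun θ => g θ - θ) := hg.sub (convexOn_id (convex_Icc 0 b))
  have h0b : (0 : ℝ) ∈ Icc 0 b := left_mem_Icc.2 (hu.1.trans hu.2)
  wlog huv : u < v generalizing u v
  · rcases (not_lt.1 huv).eq_or_lt with h | h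
    · exact h.symm
    · exact (this hv hu hgv hgu h).symm
  have hu0 : 0 < u := hu.1.lt_of_ne fun h => by rw [← h] at hgu; linarith
  have hseg : u ∈ openSegment ℝ 0 v := by
    rw [openSegment_eq_Ioo (hu0.trans huv)]
    exact ⟨hu0, huv⟩
  have := hf.lt_right_of_left_lt h0b hv hseg (by linarith)
  linarith

lemma ConcaveOn.existsUnique_fixedPoint_Icc {g : ℝ → ℝ} {b : ℝ} (hg : ConcaveOn ℝ (Icc 0 b) g)
    (hgc : ContinuousOn g (Icc 0 b)) (hb : 0 ≤ b) (h0 : 0 < g 0) (hgb : g b < b) :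
    ∃! θ, θ ∈ Icc 0 b ∧ g θ = θ := by
  have hf : ContinuousOn (fun θ => g θ - θ) (Icc 0 b) := hgc.sub continuousOn_id
  obtain ⟨θ, hθ, hfθ⟩ : (0 : ℝ) ∈ (fun θ => g θ - θ) '' Icc 0 b :=
    intermediate_value_Icc' hb hf ⟨(by linarith : g b - b ≤ 0), (by linarith : 0 ≤ g 0 - 0)⟩
  have hgθ : g θ = θ := sub_eq_zero.1 hfθ
  exact ⟨θ, ⟨hθ, hgθ⟩, fun u hu => hg.eq_of_fixedPoints_Icc h0 hu.1 hθ hu.2 hgθ⟩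

lemma antitoneOn_div_mul_add_one_sq {a : ℝ} (ha : 0 < a) :
    AntitoneOn (fun x : ℝ => x / (a * x + 1) ^ 2) (Ici (1 / a)) := by
  intro x hx y hy hxy
  rw [mem_Ici, div_le_iff₀' ha] at hx hy
  rw [div_le_div_iff₀ (by nlinarith) (by nlinarith)]
  have hcross : x * (a * y + 1) ^ 2 - y * (a * x + 1) ^ 2 = (y - x) * (a * x * (a * y) - 1) := by
    ring
  nlinarith [mul_le_mul hx hy zero_le_one (by linarith)]

section gNeg

variable {q : ℕ} {β h : ℝ}

lemma gNeg_denom_pos (hq : 1 ≤ q) (θ : ℝ) : 0 < ((q : ℝ) - 1) * exp (β * θ - h) + 1 := by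
  have : (1 : ℝ) ≤ q := by exact_mod_cast hq
  have := exp_pos (β * θ - h)
  nlinarith

lemma continuous_gNeg (hq : 1 ≤ q) : Continuous (gNeg q β h) :=
  Continuous.div (by fun_prop) (by fun_prop) fun θ => (gNeg_denom_pos hq θ).ne'

lemma hasDerivAt_gNeg (hq : 1 ≤ q) (θ : ℝ) :
    HasDerivAt (gNeg q β h)
      (q * β * (exp (β * θ - h) / (((q : ℝ) - 1) * exp (β * θ - h) + 1) ^ 2)) θ := by
  have hE : HasDerivAt (fun θ => exp (β * θ - h)) (exp (β * θ - h) * β) θ := by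
    simpa using (((hasDerivAt_id θ).const_mul β).sub_const h).exp
  refine ((hE.sub_const 1).div ((hE.const_mul ((q : ℝ) - 1)).add_const 1)
    (gNeg_denom_pos hq θ).ne').congr_deriv ?_
  ring

lemma gNeg_monotone (hq : 1 ≤ q) (hβ : 0 ≤ β) : Monotone (gNeg q β h) := by
  intro x y hxy
  have hE : exp (β * x - h) ≤ exp (β * y - h) := by gcongr
  have : (1 : ℝ) ≤ q := by exact_mod_cast hq
  rw [gNeg, gNeg, div_le_div_iff₀ (gNeg_denom_pos hq x) (gNeg_denom_pos hq y)]
  nlinarith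

lemma gNeg_zero_pos (hq : 1 ≤ q) (hh : h < 0) : 0 < gNeg q β h 0 := by
  refine div_pos ?_ (gNeg_denom_pos hq 0)
  simpa using hh

lemma gNeg_lt_inv (hq : 2 ≤ q) (θ : ℝ) : gNeg q β h θ < 1 / ((q : ℝ) - 1) := by
  have : (2 : ℝ) ≤ q := by exact_mod_cast hq
  rw [gNeg, div_lt_div_iff₀ (gNeg_denom_pos (by omega) θ) (by linarith)]
  nlinarith

lemma gNeg_lt_one (hq : 2 ≤ q) (θ : ℝ) : gNeg q β h θ < 1 := by
  have : (2 : ℝ) ≤ q := by exact_mod_cast hq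
  refine (gNeg_lt_inv hq θ).trans_le ?_
  rw [div_le_one (by linarith)]
  linarith

lemma gNeg_concaveOn (hq : 2 ≤ q) (hβ : 0 ≤ β) (hh : h ≤ 0) :
    ConcaveOn ℝ (Ici 0) (gNeg q β h) := by
  have ha : (1 : ℝ) ≤ (q : ℝ) - 1 := by
    have : (2 : ℝ) ≤ q := by exact_mod_cast hq
    linarith
  have hderiv : deriv (gNeg q β h) = fun θ =>
      q * β * (exp (β * θ - h) / (((q : ℝ) - 1) * exp (β * θ - h) + 1) ^ 2) :=
    funext fun θ => (hasDerivAt_gNeg (by omega) θ).deriv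
  refine AntitoneOn.concaveOn_of_deriv (convex_Ici 0) (continuous_gNeg (by omega)).continuousOn
    (fun θ _ => (hasDerivAt_gNeg (by omega) θ).differentiableAt.differentiableWithinAt) ?_
  rw [hderiv, interior_Ici]
  have hE : ∀ θ ∈ Ioi (0 : ℝ), exp (β * θ - h) ∈ Ici (1 / ((q : ℝ) - 1)) := fun θ hθ =>
    calc 1 / ((q : ℝ) - 1) ≤ 1 := by rw [div_le_one (by linarith)]; exact ha
      _ ≤ exp (β * θ - h) := one_le_exp (by nlinarith [mem_Ioi.1 hθ])
  intro x hx y hy hxy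
  exact mul_le_mul_of_nonneg_left
    (antitoneOn_div_mul_add_one_sq (by linarith) (hE x hx) (hE y hy) (by gcongr))
    (by positivity)

end gNeg

/-- Properties of the negative-field fixed-point map `g` (Lemma 5.5). -/
theorem potts_gNeg_properties (q : ℕ) (hq : 2 ≤ q) (β h : ℝ) (hβ : 0 ≤ β) (hh : h < 0) :
    MonotoneOn (gNeg q β h) (Icc (0 : ℝ) (1 / ((q : ℝ) - 1))) ∧
    ConcaveOn ℝ (Icc (0 : ℝ) (1 / ((q : ℝ) - 1))) (gNeg q β h) ∧
    0 < gNeg q β h 0 ∧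
    (∀ θ ∈ Icc (0 : ℝ) (1 / ((q : ℝ) - 1)), gNeg q β h θ < 1) ∧
    (∃! θ, θ ∈ Icc (0 : ℝ) (1 / ((q : ℝ) - 1)) ∧ gNeg q β h θ = θ) := by
  have hb : (0 : ℝ) ≤ 1 / ((q : ℝ) - 1) := by
    have : (2 : ℝ) ≤ q := by exact_mod_cast hq
    exact one_div_nonneg.2 (by linarith)
  have hconc : ConcaveOn ℝ (Icc (0 : ℝ) (1 / ((q : ℝ) - 1))) (gNeg q β h) :=
    (gNeg_concaveOn hq hβ hh.le).subset Icc_subset_Ici_self (convex_Icc _ _)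
  have hg0 : 0 < gNeg q β h 0 := gNeg_zero_pos (by omega) hh
  refine ⟨(gNeg_monotone (by omega) hβ).monotoneOn _, hconc, hg0, fun θ _ => gNeg_lt_one hq θ, ?_⟩
  exact hconc.existsUnique_fixedPoint_Icc (continuous_gNeg (by omega)).continuousOn hb hg0
    (gNeg_lt_inv hq _)
end
end

section
/- Let q ≥ 4 be an integer, β ≥ 0 and h < 0. Suppose Φ_{β,h}^{(q)} has both a symmetric global minimizer x^S, satisfying x^S₁ < x^S₂ = ... = x^S_q, and an asymmetric global minimizer x^A, satisfying x^A₁ < x^A₂ = ... = x^A_{q−1} < x^A_q. Then x^A₁ < x^S₁ and x^S_q < x^A_q. Moreover, there exists a constant c_q > 0, depending only on q, such that for every β ≥ 0 and every h < 0 at which both such global minimizers exist, one has Σ_{k=1}^{q} (x^A_k)² − Σ_{k=1}^{q} (x^S_k)² ≥ c_q. -/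
/-!
Both minimizers lie in the interior of the simplex, because `t log t` has infinite slope at
`0`. Writing `x^S = (a, s, …, s)` and `x^A = (b, m, …, m, M)`, stationarity says that
`f(t) = log t - β t` takes the same value at `m` and `M`, and that `f(a) - h = f(s)`,
`f(b) - h = f(m)`. Second-order stability along the direction moving mass from the middle
coordinates to the last one gives `β s ≤ 1` and `(q - 1) β ≤ (q - 2)/M + 1/m`; together with
`f(m) = f(M)` and the logarithmic-mean inequality the latter yields `β m < 1 < β M` and
`β (M - m) ≥ 2/3`. Since `f` is increasing on `(0, 1/β]`, `b < a ⟺ m < s`, and the mass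
constraints force both. Finally `Σ (x^A)² - Σ (x^S)² ≥ (M - m)²/2`, and `β ≤ q` turns
`β (M - m) ≥ 2/3` into `M - m ≥ 2/(3q)`.
-/

open Real Set

noncomputable section

/-- The last coordinate index of `Fin q` (corresponding to `x_q`). -/
def lastIdx (q : ℕ) [NeZero q] : Fin q :=
  ⟨q - 1, Nat.sub_lt (Nat.pos_of_ne_zero (NeZero.ne q)) Nat.one_pos⟩

/-- `k` is one of the "middle" indices `2,…,q-1` (i.e. `1,…,q-2` in 0-based indexing). -/
def IsMid (q : ℕ) [NeZero q] (k : Fin q) : Prop := k ≠ 0 ∧ k ≠ lastIdx q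

/-- The symmetric form `x₁ < x₂ = x₃ = … = x_q`. -/
def SymMinForm (q : ℕ) [NeZero q] (x : Fin q → ℝ) : Prop :=
  (∀ j k : Fin q, j ≠ 0 → k ≠ 0 → x j = x k) ∧ (∀ k : Fin q, k ≠ 0 → x 0 < x k)

/-- The asymmetric form `x₁ < x₂ = … = x_{q-1} < x_q`. -/
def AsymForm (q : ℕ) [NeZero q] (x : Fin q → ℝ) : Prop :=
  (∀ j k : Fin q, IsMid q j → IsMid q k → x j = x k) ∧
  (∀ j : Fin q, IsMid q j → x 0 < x j) ∧
  (∀ j : Fin q, IsMid q j → x j < x (lastIdx q))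

namespace Real

theorem log_le_sub_inv_div_two {t : ℝ} (ht : 1 ≤ t) : log t ≤ (t - t⁻¹) / 2 := by
  rw [← sinh_log (by linarith)]
  exact self_le_sinh_iff.2 (log_nonneg ht)

theorem two_mul_sub_div_add_le_log {t : ℝ} (ht : 1 ≤ t) : 2 * (t - 1) / (t + 1) ≤ log t := by
  have hs := hasSum_log_one_add (sub_nonneg.2 ht)
  rw [add_sub_cancel] at hs
  calc 2 * (t - 1) / (t + 1)
      = 2 * (1 / (2 * (0 : ℕ) + 1)) * ((t - 1) / (t - 1 + 2)) ^ (2 * 0 + 1) := by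
        norm_num; ring_nf
    _ ≤ log t := le_hasSum hs 0 fun k _ => by positivity

/-- The second-order Taylor bound for `t ↦ t log t`, whose second derivative `1/t` is at most
`1/c` between `x` and `y`. -/
theorem mul_log_le_of_le_min {x y c : ℝ} (hc : 0 < c) (hcx : c ≤ x) (hcy : c ≤ y) :
    y * log y ≤ x * log x + (y - x) * (log x + 1) + (y - x) ^ 2 / (2 * c) := by
  have hx : 0 < x := hc.trans_le hcx
  have hy : 0 < y := hc.trans_le hcy
  rcases le_total x y with hxy | hyx
  · have hlog := log_le_sub_inv_div_two ((one_le_div hx).2 hxy)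
    rw [log_div hy.ne' hx.ne'] at hlog
    have : y * (log y - log x) ≤ (y - x) + (y - x) ^ 2 / (2 * c) :=
      calc y * (log y - log x) ≤ y * ((y / x - (y / x)⁻¹) / 2) := by gcongr
        _ = (y - x) + (y - x) ^ 2 / (2 * x) := by field_simp; ring
        _ ≤ (y - x) + (y - x) ^ 2 / (2 * c) := by gcongr
    linarith
  · have hlog := two_mul_sub_div_add_le_log ((one_le_div hy).2 hyx)
    rw [log_div hx.ne' hy.ne'] at hlog
    have : y * (log y - log x) ≤ (y - x) + (y - x) ^ 2 / (2 * c) :=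
      calc y * (log y - log x) ≤ y * -(2 * (x / y - 1) / (x / y + 1)) := by gcongr; linarith
        _ = (y - x) + (y - x) ^ 2 / (x + y) := by field_simp; ring
        _ ≤ (y - x) + (y - x) ^ 2 / (2 * c) := by gcongr; linarith
    linarith

theorem neg_mul_sq_add_mul_log_le_of_le_min (β : ℝ) {x y c : ℝ} (hc : 0 < c) (hcx : c ≤ x)
    (hcy : c ≤ y) :
    -(β / 2) * y ^ 2 + y * log y ≤ -(β / 2) * x ^ 2 + x * log x
      + (y - x) * (log x + 1 - β * x) + (y - x) ^ 2 / 2 * (c⁻¹ - β) := by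
  linear_combination mul_log_le_of_le_min hc hcx hcy

end Real

open Filter Topology

section Perturbation

variable {ι : Type*} [Fintype ι] {x : ι → ℝ}

lemma eventually_forall_pos_sub_abs_mul (hpos : ∀ k, 0 < x k) (v : ι → ℝ) :
    ∀ᶠ u in 𝓝 (0 : ℝ), ∀ k, 0 < x k - |u| * |v k| := by
  refine eventually_all.2 fun k => ?_
  have : ContinuousAt (fun u : ℝ => x k - |u| * |v k|) 0 := by fun_prop
  exact this.eventually (lt_mem_nhds (by simpa using hpos k))

lemma tendsto_sum_sq_mul_inv_sub (β : ℝ) (hpos : ∀ k, 0 < x k) (v : ι → ℝ) :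
    Tendsto (fun u : ℝ => ∑ k, v k ^ 2 * ((x k - |u| * |v k|)⁻¹ - β)) (𝓝 0)
      (𝓝 (∑ k, v k ^ 2 * ((x k)⁻¹ - β))) := by
  have : ContinuousAt (fun u : ℝ => ∑ k, v k ^ 2 * ((x k - |u| * |v k|)⁻¹ - β)) 0 := by
    fun_prop (disch := simp [(hpos _).ne'])
  simpa using this.tendsto

end Perturbation

section Potts

variable {q : ℕ} {β h : ℝ} {x v : Fin q → ℝ}

lemma add_smul_mem_pottsSimplex {u : ℝ} (hx : x ∈ pottsSimplex q) (hv : ∑ k, v k = 0)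
    (hnn : ∀ k, 0 ≤ x k + u * v k) : x + u • v ∈ pottsSimplex q :=
  ⟨hnn, by simp [Finset.sum_add_distrib, ← Finset.mul_sum, hv, hx.2]⟩

variable [NeZero q]

lemma lastIdx_ne_zero (hq : 2 ≤ q) : lastIdx q ≠ 0 := by
  simp [lastIdx, Fin.ext_iff]; omega

lemma sum_eq_of_isMid (hq : 2 ≤ q) {F : Fin q → ℝ} {c : ℝ}
    (hF : ∀ k, IsMid q k → F k = c) :
    ∑ k, F k = F 0 + F (lastIdx q) + (q - 2) * c := by
  classical
  have hL := lastIdx_ne_zero hq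
  rw [← Finset.sum_add_sum_compl {0, lastIdx q}, Finset.sum_pair hL.symm,
    Finset.sum_congr rfl fun k hk => hF k (by simpa [IsMid, not_or] using hk), Finset.sum_const,
    Finset.card_compl, Finset.card_pair hL.symm, Fintype.card_fin, nsmul_eq_mul,
    Nat.cast_sub hq]
  push_cast; ring

lemma pottsPhi_sub (y : Fin q → ℝ) : pottsPhi q β h y - pottsPhi q β h x =
    ∑ k, ((-(β / 2) * y k ^ 2 + y k * log (y k)) - (-(β / 2) * x k ^ 2 + x k * log (x k)))
      - h * (y 0 - x 0) := by
  simp only [pottsPhi, Finset.sum_sub_distrib]; ring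

/-- Minimality along the segment `x + u • v`, expanded to second order: the first-order term
is the directional derivative of `pottsPhi`, and the curvature of `t log t` is bounded on
`[x k - |u| |v k|, ∞)`. -/
lemma IsPottsMinimizer.nonneg_along (hmin : IsPottsMinimizer q β h x) (hv : ∑ k, v k = 0)
    {u : ℝ} (hc : ∀ k, 0 < x k - |u| * |v k|) :
    0 ≤ u * (∑ k, v k * (log (x k) - β * x k) - h * v 0)
      + u ^ 2 / 2 * ∑ k, v k ^ 2 * ((x k - |u| * |v k|)⁻¹ - β) := by
  have hle : ∀ k, x k - |u| * |v k| ≤ x k + u * v k := fun k => by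
    have := neg_abs_le (u * v k); rw [abs_mul] at this; linarith
  have hmem := add_smul_mem_pottsSimplex hmin.1 hv fun k => ((hc k).trans_le (hle k)).le
  have hfirst : ∑ k, u * v k * (log (x k) + 1 - β * x k)
      = u * ∑ k, v k * (log (x k) - β * x k) := by
    simp only [mul_assoc, ← Finset.mul_sum, mul_sub, mul_add, mul_one, Finset.sum_sub_distrib,
      Finset.sum_add_distrib, hv]
    ring
  have hsecond : ∑ k, (u * v k) ^ 2 / 2 * ((x k - |u| * |v k|)⁻¹ - β)
      = u ^ 2 / 2 * ∑ k, v k ^ 2 * ((x k - |u| * |v k|)⁻¹ - β) := by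
    rw [Finset.mul_sum]; congr! 1; ring
  calc 0 ≤ pottsPhi q β h (x + u • v) - pottsPhi q β h x := sub_nonneg.2 (hmin.2 _ hmem)
    _ ≤ ∑ k, (u * v k * (log (x k) + 1 - β * x k)
            + (u * v k) ^ 2 / 2 * ((x k - |u| * |v k|)⁻¹ - β)) - h * (u * v 0) := by
      rw [pottsPhi_sub]
      simp only [Pi.add_apply, Pi.smul_apply, smul_eq_mul, add_sub_cancel_left]
      gcongr with k
      have := Real.neg_mul_sq_add_mul_log_le_of_le_min β (hc k) (sub_le_self _ (by positivity))
        (hle k)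
      rw [add_sub_cancel_left] at this
      linarith
    _ = _ := by rw [Finset.sum_add_distrib, hfirst, hsecond]; ring

theorem IsPottsMinimizer.sum_mul_log_sub_mul_eq (hmin : IsPottsMinimizer q β h x)
    (hpos : ∀ k, 0 < x k) (hv : ∑ k, v k = 0) :
    ∑ k, v k * (log (x k) - β * x k) = h * v 0 := by
  suffices key : ∀ w : Fin q → ℝ, ∑ k, w k = 0 →
      0 ≤ ∑ k, w k * (log (x k) - β * x k) - h * w 0 by
    have h₁ := key v hv
    have h₂ := key (-v) (by simp [hv])
    simp only [Pi.neg_apply, neg_mul, Finset.sum_neg_distrib] at h₂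
    linarith
  intro w hw
  set D := ∑ k, w k * (log (x k) - β * x k) - h * w 0
  have hlim : Tendsto (fun u : ℝ => D + u / 2 * ∑ k, w k ^ 2 * ((x k - |u| * |w k|)⁻¹ - β))
      (𝓝[>] 0) (𝓝 D) := by
    simpa using (tendsto_const_nhds.add ((tendsto_id.div_const 2).mul
      (tendsto_sum_sq_mul_inv_sub β hpos w))).mono_left nhdsWithin_le_nhds
  refine ge_of_tendsto hlim ?_
  filter_upwards [self_mem_nhdsWithin,
    nhdsWithin_le_nhds (eventually_forall_pos_sub_abs_mul hpos w)] with u (hu : 0 < u) hc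
  refine (mul_nonneg_iff_of_pos_left hu).1 ?_
  linarith [hmin.nonneg_along hw hc]

theorem IsPottsMinimizer.sum_sq_mul_inv_sub_nonneg (hmin : IsPottsMinimizer q β h x)
    (hpos : ∀ k, 0 < x k) (hv : ∑ k, v k = 0) : 0 ≤ ∑ k, v k ^ 2 * ((x k)⁻¹ - β) := by
  refine ge_of_tendsto (x := 𝓝[≠] 0)
    ((tendsto_sum_sq_mul_inv_sub β hpos v).mono_left nhdsWithin_le_nhds) ?_
  filter_upwards [self_mem_nhdsWithin,
    nhdsWithin_le_nhds (eventually_forall_pos_sub_abs_mul hpos v)] with u (hu : u ≠ 0) hc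
  have := hmin.nonneg_along hv hc
  rw [hmin.sum_mul_log_sub_mul_eq hpos hv, sub_self, mul_zero, zero_add] at this
  exact (mul_nonneg_iff_of_pos_left (by positivity)).1 this

theorem IsPottsMinimizer.log_sub_mul_eq (hmin : IsPottsMinimizer q β h x)
    (hpos : ∀ k, 0 < x k) {j k : Fin q} (hjk : j ≠ k) :
    log (x j) - β * x j - (if j = 0 then h else 0)
      = log (x k) - β * x k - (if k = 0 then h else 0) := by
  have := hmin.sum_mul_log_sub_mul_eq hpos (v := Pi.single j 1 - Pi.single k 1) (by simp)
  simp only [Pi.sub_apply, sub_mul, Finset.sum_sub_distrib, Pi.single_apply, ite_mul, one_mul,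
    zero_mul, Finset.sum_ite_eq', Finset.mem_univ, if_true, eq_comm (a := (0 : Fin q))] at this
  split_ifs at this ⊢ <;> simp_all <;> linarith

/-- Moving mass `u` from a positive coordinate to an empty one changes `pottsPhi` by at most
`u (log u + K)`, which is negative for small `u`. -/
theorem IsPottsMinimizer.pos (hmin : IsPottsMinimizer q β h x) (hβ : 0 ≤ β) (k : Fin q) :
    0 < x k := by
  by_contra hk
  have hxk : x k = 0 := le_antisymm (not_lt.1 hk) (hmin.1.1 k)
  obtain ⟨j, hj⟩ : ∃ j, 0 < x j := by
    by_contra! hneg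
    linarith [Finset.sum_nonpos (s := Finset.univ) fun i _ => hneg i, hmin.1.2]
  have hjk : j ≠ k := by rintro rfl; linarith
  set v : Fin q → ℝ := Pi.single k 1 - Pi.single j 1
  have hv : ∑ i, v i = 0 := by simp [v]
  have hv0 : |v 0| ≤ 1 := by
    simp only [v, Pi.sub_apply, Pi.single_apply]; split_ifs <;> simp_all
  set K := |h| + β * x j - log (x j)
  have hdrop : ∀ u, 0 < u → u ≤ x j / 2 →
      pottsPhi q β h (x + u • v) - pottsPhi q β h x ≤ u * (log u + K) := by
    intro u hu hux
    rw [pottsPhi_sub, Fintype.sum_eq_add k j hjk.symm fun i hi => by simp [v, hi.1, hi.2]]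
    have ek : (x + u • v) k = u := by simp [v, hjk.symm, hxk]
    have ej : (x + u • v) j = x j - u := by simp [v, hjk, sub_eq_add_neg]
    have e0 : (x + u • v) 0 - x 0 = u * v 0 := by simp
    rw [ek, ej, e0, hxk]
    have hsite := Real.neg_mul_sq_add_mul_log_le_of_le_min β (x := x j) (y := x j - u)
      (c := x j - u) (by linarith) (by linarith) le_rfl
    have hquad : u ^ 2 / 2 * (x j - u)⁻¹ ≤ u / 2 := by
      rw [← div_eq_mul_inv, div_le_iff₀ (by linarith)]; nlinarith
    have hfield : -(h * v 0) ≤ |h| :=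
      (neg_le_abs _).trans (by rw [abs_mul]; exact mul_le_of_le_one_right (abs_nonneg h) hv0)
    nlinarith [mul_le_mul_of_nonneg_left hfield hu.le]
  obtain ⟨u, hu, hux, hlog⟩ : ∃ u, 0 < u ∧ u ≤ x j / 2 ∧ log u < -K := by
    have hsmall : ∀ᶠ u in 𝓝[>] (0 : ℝ), u ≤ x j / 2 :=
      nhdsWithin_le_nhds (eventually_le_nhds (by linarith))
    exact (eventually_mem_nhdsWithin.and (hsmall.and
      (tendsto_log_nhdsGT_zero.eventually (eventually_lt_atBot (-K))))).exists
  have hmem : x + u • v ∈ pottsSimplex q := by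
    refine add_smul_mem_pottsSimplex hmin.1 hv fun i => ?_
    by_cases hij : i = j
    · subst hij; simp [v, hjk]; linarith
    · have : 0 ≤ v i := by
        simp only [v, Pi.sub_apply, Pi.single_apply, hij, if_false, sub_zero]
        split_ifs <;> norm_num
      nlinarith [hmin.1.1 i]
  linarith [hmin.2 _ hmem, hdrop u hu hux, mul_neg_of_pos_of_neg hu (by linarith : log u + K < 0)]

def midToLast (q : ℕ) [NeZero q] : Fin q → ℝ :=
  fun k => if k = 0 then 0 else if k = lastIdx q then (q : ℝ) - 2 else -1

lemma midToLast_of_isMid {k : Fin q} (hk : IsMid q k) : midToLast q k = -1 := by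
  simp [midToLast, hk.1, hk.2]

theorem IsPottsMinimizer.inv_sub_nonneg_of_isMid (hmin : IsPottsMinimizer q β h x)
    (hpos : ∀ k, 0 < x k) (hq : 3 ≤ q) {c : ℝ} (hc : ∀ k, IsMid q k → x k = c) :
    0 ≤ (q - 2) * ((x (lastIdx q))⁻¹ - β) + (c⁻¹ - β) := by
  have hL := lastIdx_ne_zero (by omega : 2 ≤ q)
  have hq' : (3 : ℝ) ≤ q := by exact_mod_cast hq
  have hv : ∑ k, midToLast q k = 0 := by
    rw [sum_eq_of_isMid (by omega) fun k hk => midToLast_of_isMid hk]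
    simp [midToLast, hL]
  have := hmin.sum_sq_mul_inv_sub_nonneg hpos hv
  rw [sum_eq_of_isMid (c := c⁻¹ - β) (by omega)
    fun k hk => by rw [midToLast_of_isMid hk, hc k hk]; ring] at this
  simp only [midToLast, if_true, hL, if_false] at this
  have : 0 ≤ (q - 2) * ((q - 2) * ((x (lastIdx q))⁻¹ - β) + (c⁻¹ - β)) := by linarith
  exact nonneg_of_mul_nonneg_right this (by linarith)

end Potts

lemma two_le_mul_add_of_log_sub_mul_eq {β m M : ℝ} (hm : 0 < m) (hmM : m < M)
    (h : log m - β * m = log M - β * M) : 2 ≤ β * (m + M) := by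
  have hM : 0 < M := hm.trans hmM
  have hlog := Real.two_mul_sub_div_add_le_log ((one_le_div hm).2 hmM.le)
  rw [log_div hM.ne' hm.ne', show log M - log m = β * (M - m) by linarith,
    show 2 * (M / m - 1) / (M / m + 1) = 2 * (M - m) / (M + m) by field_simp,
    div_le_iff₀ (by positivity)] at hlog
  nlinarith

/-- Applied with `X = β m`, `Y = β M`, `n = q - 2`: `hsum` is the logarithmic-mean consequence
of `log m - β m = log M - β M`, and `hstab` the second-order stability of the asymmetric
minimizer. -/
lemma two_thirds_le_sub_of_mul_le {n X Y : ℝ} (hn : 2 ≤ n) (hX : 0 < X) (hXY : X < Y)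
    (hsum : 2 ≤ X + Y) (hstab : (n + 1) * X * Y ≤ n * X + Y) :
    X < 1 ∧ 1 < Y ∧ 2 / 3 ≤ Y - X := by
  have hX1 : X < 1 := by
    by_contra! hX1
    nlinarith [mul_pos (mul_pos (by linarith : (0 : ℝ) < n) hX) (by linarith : (0 : ℝ) < Y - 1),
      mul_nonneg (hX.trans hXY).le (by linarith : (0 : ℝ) ≤ X - 1)]
  refine ⟨hX1, by linarith, ?_⟩
  by_contra! hlt
  have hpos : 0 < (n + 1) * X - 1 := by nlinarith
  have h1 : (2 - X) * ((n + 1) * X - 1) ≤ n * X := by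
    nlinarith [mul_le_mul_of_nonneg_right (by linarith : 2 - X ≤ Y) hpos.le]
  have h2 : ((n + 1) * X - 2) * (1 - X) ≤ 0 := by linear_combination h1
  have h3 : (n + 1) * X ≤ 2 := by nlinarith
  nlinarith [mul_nonneg (by linarith : (0 : ℝ) ≤ n - 2) hX.le]

lemma strictMonoOn_log_sub_mul (β : ℝ) :
    StrictMonoOn (fun t => log t - β * t) {t | 0 < t ∧ β * t ≤ 1} := by
  rintro u ⟨hu, -⟩ v ⟨hv, hβv⟩ huv
  have h1 := log_lt_sub_one_of_pos (div_pos hu hv)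
    (by rw [Ne, div_eq_one_iff_eq hv.ne']; exact huv.ne)
  rw [log_div hu.ne' hv.ne', div_sub_one hv.ne', lt_div_iff₀ hv] at h1
  nlinarith

lemma lt_and_lt_and_lt_of_stationary {q β h a s b m M : ℝ} (hq : 2 ≤ q) (ha : 0 < a)
    (hb : 0 < b) (has : a < s) (hbm : b < m) (hmM : m < M) (hS : a + (q - 1) * s = 1)
    (hA : b + (q - 2) * m + M = 1) (hfS : log a - β * a - h = log s - β * s)
    (hfA : log b - β * b - h = log m - β * m) (hβs : β * s ≤ 1) (hβm : β * m < 1)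
    (hβM : 1 < β * M) : b < a ∧ m < s ∧ s < M := by
  have hβ : 0 < β := pos_of_mul_pos_left (by linarith : 0 < β * (M - m)) (by linarith)
  have hsM : s < M := lt_of_mul_lt_mul_left (hβs.trans_lt hβM) hβ.le
  have hmono := strictMonoOn_log_sub_mul β
  have hba_iff : b < a ↔ m < s := by
    rw [← hmono.lt_iff_lt ⟨hb, by nlinarith⟩ ⟨ha, by nlinarith⟩,
      ← hmono.lt_iff_lt ⟨hb.trans hbm, hβm.le⟩ ⟨ha.trans has, hβs⟩]
    constructor <;> intro <;> linarith
  have hms : m < s := by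
    by_contra! hsm
    have hab : a ≤ b := not_lt.1 (mt hba_iff.1 hsm.not_gt)
    nlinarith [mul_nonneg (sub_nonneg.2 hq) (sub_nonneg.2 hsm)]
  exact ⟨hba_iff.2 hms, hms, hsM⟩

lemma two_div_nine_sq_le_sum_sq_sub {q a s b m M : ℝ} (hq : 3 ≤ q) (has : a < s) (hba : b < a)
    (hbm : b < m) (hms : m < s) (hS : a + (q - 1) * s = 1) (hA : b + (q - 2) * m + M = 1)
    (hMm : 2 / (3 * q) ≤ M - m) :
    2 / (9 * q ^ 2) ≤ b ^ 2 + M ^ 2 + (q - 2) * m ^ 2 - (a ^ 2 + (q - 1) * s ^ 2) := by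
  have hlin : M - m = (a - b) + (q - 1) * (s - m) := by linear_combination hA - hS
  have hMm0 : 0 ≤ M - m := (by positivity : (0 : ℝ) ≤ 2 / (3 * q)).trans hMm
  calc 2 / (9 * q ^ 2) = 2 / (3 * q) * (2 / (3 * q) / 2) := by field_simp; ring
    _ ≤ (M - m) * ((M - m) / 2) := by gcongr
    _ ≤ (M - m) * ((a - b) + (q - 2) * (s - m)) := by
      gcongr; nlinarith [mul_nonneg (by linarith : (0 : ℝ) ≤ q - 3) (sub_nonneg.2 hms.le)]
    _ ≤ (a - b) * (M + s - a - b) + (q - 2) * (s - m) * (M - m) := by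
      nlinarith [mul_nonneg (sub_nonneg.2 hba.le) (by linarith : (0 : ℝ) ≤ s - a + (m - b))]
    _ = b ^ 2 + M ^ 2 + (q - 2) * m ^ 2 - (a ^ 2 + (q - 1) * s ^ 2) := by
      linear_combination -(M + s) * hA + (M + s) * hS

section Coexistence

variable {q : ℕ} [NeZero q] {β h : ℝ} {x : Fin q → ℝ}

theorem IsPottsMinimizer.mul_le_one_of_symMinForm (hmin : IsPottsMinimizer q β h x)
    (hform : SymMinForm q x) (hq : 3 ≤ q) (hβ : 0 ≤ β) : β * x (lastIdx q) ≤ 1 := by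
  have hL := lastIdx_ne_zero (by omega : 2 ≤ q)
  have hs := hmin.pos hβ (lastIdx q)
  have hstab := hmin.inv_sub_nonneg_of_isMid (hmin.pos hβ) hq fun k hk => hform.1 k _ hk.1 hL
  have hq' : (3 : ℝ) ≤ q := by exact_mod_cast hq
  have : β ≤ (x (lastIdx q))⁻¹ := by nlinarith
  calc β * x (lastIdx q) ≤ (x (lastIdx q))⁻¹ * x (lastIdx q) := by gcongr
    _ = 1 := inv_mul_cancel₀ hs.ne'

theorem IsPottsMinimizer.mul_bounds_of_asymForm (hmin : IsPottsMinimizer q β h x)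
    (hform : AsymForm q x) (hq : 4 ≤ q) (hβ : 0 ≤ β) {i : Fin q} (hi : IsMid q i) :
    β * x i < 1 ∧ 1 < β * x (lastIdx q) ∧ 2 / 3 ≤ β * (x (lastIdx q) - x i) := by
  have hL := lastIdx_ne_zero (by omega : 2 ≤ q)
  have hpos := hmin.pos hβ
  have hm := hpos i
  have hM := hpos (lastIdx q)
  have hmM : x i < x (lastIdx q) := hform.2.2 i hi
  have hsum := two_le_mul_add_of_log_sub_mul_eq hm hmM
    (by simpa [hi.1, hL] using hmin.log_sub_mul_eq hpos hi.2)
  have hβ' : 0 < β := hβ.lt_of_ne (by rintro rfl; norm_num at hsum)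
  have hstab := hmin.inv_sub_nonneg_of_isMid hpos (by omega) fun k hk => hform.1 k i hk hi
  have hstab' : ((q - 2 : ℝ) + 1) * (β * x i) * (β * x (lastIdx q))
      ≤ (q - 2 : ℝ) * (β * x i) + β * x (lastIdx q) := by
    have e : β * x i * x (lastIdx q) * ((q - 2) * ((x (lastIdx q))⁻¹ - β) + ((x i)⁻¹ - β))
        = (q - 2 : ℝ) * (β * x i) + β * x (lastIdx q)
          - ((q - 2 : ℝ) + 1) * (β * x i) * (β * x (lastIdx q)) := by
      field_simp; ring
    nlinarith [mul_nonneg (mul_pos (mul_pos hβ' hm) hM).le hstab]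
  have hq' : (4 : ℝ) ≤ q := by exact_mod_cast hq
  obtain ⟨h1, h2, h3⟩ := two_thirds_le_sub_of_mul_le (by linarith) (mul_pos hβ' hm)
    (mul_lt_mul_of_pos_left hmM hβ') (by linarith) hstab'
  exact ⟨h1, h2, by linarith⟩

theorem IsPottsMinimizer.coexistence_bounds (hq : 4 ≤ q) (hβ : 0 ≤ β) {xS xA : Fin q → ℝ}
    (minS : IsPottsMinimizer q β h xS) (formS : SymMinForm q xS)
    (minA : IsPottsMinimizer q β h xA) (formA : AsymForm q xA) :
    xA 0 < xS 0 ∧ xS (lastIdx q) < xA (lastIdx q) ∧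
      2 / (9 * q ^ 2) ≤ ∑ k, xA k ^ 2 - ∑ k, xS k ^ 2 := by
  have hL := lastIdx_ne_zero (by omega : 2 ≤ q)
  have hq' : (4 : ℝ) ≤ q := by exact_mod_cast hq
  obtain ⟨i, hi⟩ : ∃ i, IsMid q i :=
    ⟨⟨1, by omega⟩, by simp [IsMid, lastIdx, Fin.ext_iff]; omega⟩
  have hS : ∀ k, IsMid q k → xS k = xS (lastIdx q) := fun k hk => formS.1 k _ hk.1 hL
  have hA : ∀ k, IsMid q k → xA k = xA i := fun k hk => formA.1 k i hk hi
  have posS := minS.pos hβ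
  have posA := minA.pos hβ
  have sumS := minS.1.2 ▸ sum_eq_of_isMid (by omega) hS
  have sumA := minA.1.2 ▸ sum_eq_of_isMid (by omega) hA
  have hβs := minS.mul_le_one_of_symMinForm formS (by omega) hβ
  obtain ⟨hβm, hβM, hβMm⟩ := minA.mul_bounds_of_asymForm formA hq hβ hi
  obtain ⟨hba, hms, hsM⟩ := lt_and_lt_and_lt_of_stationary (q := q) (by linarith) (posS 0)
    (posA 0) (formS.2 _ hL) (formA.2.1 i hi) (formA.2.2 i hi) (by linarith) (by linarith)
    (by simpa [hL] using minS.log_sub_mul_eq posS hL.symm)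
    (by simpa [hi.1] using minA.log_sub_mul_eq posA hi.1.symm) hβs hβm hβM
  refine ⟨hba, hsM, ?_⟩
  have hβq : β ≤ q := by nlinarith [formS.2 _ hL, posS (lastIdx q)]
  have hMm : 2 / (3 * q) ≤ xA (lastIdx q) - xA i := by
    rw [div_le_iff₀ (by positivity)]
    nlinarith [formA.2.2 i hi]
  rw [sum_eq_of_isMid (by omega) fun k hk => by rw [hA k hk],
    sum_eq_of_isMid (by omega) fun k hk => by rw [hS k hk]]
  linarith [two_div_nine_sq_le_sum_sq_sub (by linarith) (formS.2 _ hL) hba (formA.2.1 i hi) hms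
    (by linarith) (by linarith) hMm]

end Coexistence

/-- Separation of coexisting symmetric and asymmetric minimizers and a uniform
energy gap between them (Lemma 5.9). -/
theorem potts_energy_gap (q : ℕ) [NeZero q] (hq : 4 ≤ q) :
    -- `x^A₁ < x^S₁` and `x^S_q < x^A_q`
    (∀ β h : ℝ, 0 ≤ β → h < 0 → ∀ xS xA : Fin q → ℝ,
      IsPottsMinimizer q β h xS → SymMinForm q xS →
      IsPottsMinimizer q β h xA → AsymForm q xA →
      xA 0 < xS 0 ∧ xS (lastIdx q) < xA (lastIdx q)) ∧
    -- a uniform gap `e_A - e_S ≥ c_q > 0` depending only on `q`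
    ∃ c : ℝ, 0 < c ∧
      ∀ β h : ℝ, 0 ≤ β → h < 0 → ∀ xS xA : Fin q → ℝ,
        IsPottsMinimizer q β h xS → SymMinForm q xS →
        IsPottsMinimizer q β h xA → AsymForm q xA →
        (∑ k, xA k ^ 2) - (∑ k, xS k ^ 2) ≥ c := by
  refine ⟨fun β h hβ _ xS xA minS formS minA formA => ?_, 2 / (9 * q ^ 2), by positivity,
    fun β h hβ _ xS xA minS formS minA formA =>
      (minS.coexistence_bounds hq hβ formS minA formA).2.2⟩
  obtain ⟨hlt₀, hltLast, -⟩ := minS.coexistence_bounds hq hβ formS minA formA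
  exact ⟨hlt₀, hltLast⟩
end
end

section
/- There exists α > 0 such that for every sufficiently large C there exists β₀ < ∞ with the following property: for all β ≥ β₀ and all λ with |λ| ≤ C e^{−β}, every triple (x₁, x₀, x₋₁) in the simplex Δ with max{x₁, x₀, x₋₁} = 1 − C e^{−β} satisfies Φ_{β,λ}(x₁, x₀, x₋₁) − inf_{Δ} Φ_{β,λ} ≥ α (C log C) e^{−β}. -/
open Real Set

noncomputable section

/-- The simplex `Δ` of mole fractions `(x₁, x₀, x₋₁)` of the Blume-Capel model. -/
def bcSimplex : Set (ℝ × ℝ × ℝ) :=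
  {p | 0 ≤ p.1 ∧ 0 ≤ p.2.1 ∧ 0 ≤ p.2.2 ∧ p.1 + p.2.1 + p.2.2 = 1}

/-- The Blume-Capel mean-field free-energy function `Φ_{β,λ}(x₁, x₀, x₋₁)`. -/
noncomputable def bcPhi (β lam : ℝ) (p : ℝ × ℝ × ℝ) : ℝ :=
  4 * β * p.1 * p.2.2 + β * p.2.1 * (1 - p.2.1) + lam * p.2.1
    + p.1 * Real.log p.1 + p.2.1 * Real.log p.2.1 + p.2.2 * Real.log p.2.2

private lemma xlogx_ge (x u : ℝ) (hx : 0 ≤ x) (hu : 0 < u) :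
    x * Real.log u + x - u ≤ x * Real.log x := by
  rcases eq_or_lt_of_le hx with h | h
  · rw [← h]; simp; linarith
  · have hlog : Real.log (u / x) ≤ u / x - 1 :=
      Real.log_le_sub_one_of_pos (div_pos hu h)
    rw [Real.log_div (ne_of_gt hu) (ne_of_gt h)] at hlog
    have h2 := mul_le_mul_of_nonneg_left hlog h.le
    have hx' : x * (u / x) = u := by field_simp
    nlinarith

private lemma m_small (β C : ℝ) (hC : Real.exp 8 ≤ C) (hβ : 2 * Real.log (2 * C) ≤ β) :
    0 ≤ β ∧ C * Real.exp (-β) ≤ 1 / 2 ∧ β * (C * Real.exp (-β)) ≤ 1 := by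
  have hC0 : 0 < C := lt_of_lt_of_le (Real.exp_pos 8) hC
  have h2C : (1:ℝ) ≤ 2 * C := by nlinarith [Real.exp_pos 8, Real.one_le_exp (by norm_num : (0:ℝ) ≤ 8)]
  have hlog0 : 0 ≤ Real.log (2 * C) := Real.log_nonneg h2C
  have hβ0 : 0 ≤ β := by linarith
  have hhalf : Real.log (2 * C) ≤ β / 2 := by linarith
  have hexp : 2 * C ≤ Real.exp (β / 2) := by
    calc 2 * C = Real.exp (Real.log (2 * C)) := (Real.exp_log (by linarith)).symm
    _ ≤ Real.exp (β / 2) := Real.exp_le_exp.mpr hhalf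
  have hβ2 : β / 2 ≤ Real.exp (β / 2) := by
    have := Real.add_one_le_exp (β / 2); linarith
  have hsq : Real.exp (β / 2) * Real.exp (β / 2) = Real.exp β := by
    rw [← Real.exp_add]; ring_nf
  have hexpβ2C : 2 * C ≤ Real.exp β := by
    nlinarith [Real.exp_pos (β / 2)]
  have hexpββC : β * C ≤ Real.exp β := by
    nlinarith [Real.exp_pos (β / 2)]
  have hinv : Real.exp (-β) = (Real.exp β)⁻¹ := by rw [Real.exp_neg]
  have hpos : 0 < Real.exp β := Real.exp_pos β
  refine ⟨hβ0, ?_, ?_⟩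
  · rw [hinv]
    rw [mul_inv_le_iff₀ hpos]
    nlinarith
  · rw [hinv]
    rw [← mul_assoc, mul_inv_le_iff₀ hpos]
    nlinarith

private lemma bc_core (β C lam yy a b : ℝ)
    (hC : Real.exp 8 ≤ C)
    (hβ : 2 * Real.log (2 * C) ≤ β)
    (hlam : |lam| ≤ C * Real.exp (-β))
    (hyy : 0 ≤ yy) (hyy1 : yy ≤ 1) (ha : 0 ≤ a) (hb : 0 ≤ b)
    (hab : a + b = C * Real.exp (-β)) :
    C * Real.exp (-β) * (Real.log C - 4) ≤
      β * (1 - C * Real.exp (-β)) * (C * Real.exp (-β)) + lam * yy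
        + (1 - C * Real.exp (-β)) * Real.log (1 - C * Real.exp (-β))
        + a * Real.log a + b * Real.log b := by
  obtain ⟨hβ0, hmhalf, hβm⟩ := m_small β C hC hβ
  set m := C * Real.exp (-β) with hm
  have hC0 : 0 < C := lt_of_lt_of_le (Real.exp_pos 8) hC
  have hm0 : 0 < m := mul_pos hC0 (Real.exp_pos _)
  have hlogm : Real.log m = Real.log C - β := by
    rw [hm, Real.log_mul (ne_of_gt hC0) (ne_of_gt (Real.exp_pos _)), Real.log_exp]
    ring
  have h1m : (0:ℝ) ≤ 1 - m := by linarith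
  have h1 : (1 - m) * Real.log 1 + (1 - m) - 1 ≤ (1 - m) * Real.log (1 - m) :=
    xlogx_ge (1 - m) 1 h1m one_pos
  rw [Real.log_one] at h1
  have h2 : a * Real.log m + a - m ≤ a * Real.log a := xlogx_ge a m ha hm0
  have h3 : b * Real.log m + b - m ≤ b * Real.log b := xlogx_ge b m hb hm0
  have h4 : a * Real.log m + b * Real.log m = m * Real.log C - m * β := by
    rw [← add_mul, hab, hlogm]; ring
  have hlamyy : -m ≤ lam * yy := by
    nlinarith [neg_abs_le lam, abs_nonneg lam]
  nlinarith [hβm, hm0.le]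

/-- Free-energy cost of configurations away from the local minima of the Blume-Capel
mean-field free energy (Lemma 5.4 = "lemma-BCmax"). -/
theorem bc_off_minimum_cost :
    ∃ α : ℝ, 0 < α ∧ ∃ C₀ : ℝ, ∀ C : ℝ, C₀ ≤ C → ∃ β₀ : ℝ, ∀ β : ℝ, β₀ ≤ β →
      ∀ lam : ℝ, |lam| ≤ C * Real.exp (-β) →
        ∀ p ∈ bcSimplex, max p.1 (max p.2.1 p.2.2) = 1 - C * Real.exp (-β) →
          bcPhi β lam p - sInf (bcPhi β lam '' bcSimplex) ≥
            α * (C * Real.log C) * Real.exp (-β) := by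
  refine ⟨1/2, by norm_num, Real.exp 8, fun C hC => ⟨2 * Real.log (2 * C),
    fun β hβ lam hlam p hp hmax => ?_⟩⟩
  obtain ⟨hx, hy, hz, hsum⟩ := hp
  obtain ⟨hβ0, hmhalf, hβm⟩ := m_small β C hC hβ
  set m := C * Real.exp (-β) with hm
  have hC0 : 0 < C := lt_of_lt_of_le (Real.exp_pos 8) hC
  have hm0 : 0 < m := mul_pos hC0 (Real.exp_pos _)
  have h1m : (0:ℝ) ≤ 1 - m := by linarith
  have hL8 : (8:ℝ) ≤ Real.log C := by
    calc (8:ℝ) = Real.log (Real.exp 8) := (Real.log_exp 8).symm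
    _ ≤ Real.log C := Real.log_le_log (Real.exp_pos 8) hC
  -- 0 ∈ image
  have h0mem : (0:ℝ) ∈ bcPhi β lam '' bcSimplex := by
    refine ⟨(1, 0, 0), ?_, ?_⟩
    · exact ⟨by norm_num, by norm_num, by norm_num, by norm_num⟩
    · simp [bcPhi]
  have hsInf : sInf (bcPhi β lam '' bcSimplex) ≤ 0 := by
    by_cases hbd : BddBelow (bcPhi β lam '' bcSimplex)
    · exact csInf_le hbd h0mem
    · rw [Real.sInf_of_not_bddBelow hbd]
  -- key lower bound on Φ p
  have key : m * (Real.log C - 4) ≤ bcPhi β lam p := by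
    have hy1 : p.2.1 ≤ 1 := by linarith
    rcases max_choice p.1 (max p.2.1 p.2.2) with h | h
    · have hx1 : p.1 = 1 - m := by rw [← h, hmax]
      have hab : p.2.1 + p.2.2 = m := by linarith
      have hcore := bc_core β C lam p.2.1 p.2.1 p.2.2 hC hβ hlam hy hy1 hy hz hab
      simp only [← hm] at hcore
      have hE : β * (1 - m) * (p.2.1 + p.2.2) ≤
          4 * β * (1 - m) * p.2.2 + β * p.2.1 * (1 - p.2.1) := by
        have h1y : 1 - p.2.1 = (1 - m) + p.2.2 := by linarith
        rw [h1y]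
        nlinarith [mul_nonneg (mul_nonneg hβ0 h1m) hz, mul_nonneg (mul_nonneg hβ0 hy) hz]
      rw [hab] at hE
      unfold bcPhi
      rw [hx1]
      linarith
    · rcases max_choice p.2.1 p.2.2 with h2 | h2
      · have hy1' : p.2.1 = 1 - m := by rw [← h2, ← h, hmax]
        have hab : p.1 + p.2.2 = m := by linarith
        have hcore := bc_core β C lam p.2.1 p.1 p.2.2 hC hβ hlam hy hy1 hx hz hab
        simp only [← hm] at hcore
        rw [hy1'] at hcore
        unfold bcPhi
        rw [hy1']
        nlinarith [mul_nonneg (mul_nonneg hβ0 hx) hz]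
      · have hz1 : p.2.2 = 1 - m := by rw [← h2, ← h, hmax]
        have hab : p.1 + p.2.1 = m := by linarith
        have hcore := bc_core β C lam p.2.1 p.1 p.2.1 hC hβ hlam hy hy1 hx hy hab
        simp only [← hm] at hcore
        have hE : β * (1 - m) * (p.1 + p.2.1) ≤
            4 * β * p.1 * (1 - m) + β * p.2.1 * (1 - p.2.1) := by
          have h1y : 1 - p.2.1 = (1 - m) + p.1 := by linarith
          rw [h1y]
          nlinarith [mul_nonneg (mul_nonneg hβ0 hx) h1m, mul_nonneg (mul_nonneg hβ0 hy) hx]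
        rw [hab] at hE
        unfold bcPhi
        rw [hz1]
        linarith
  have hfinal : 1/2 * (C * Real.log C) * Real.exp (-β) ≤ m * (Real.log C - 4) := by
    rw [hm]
    nlinarith [hm0]
  calc (1:ℝ)/2 * (C * Real.log C) * Real.exp (-β)
      ≤ m * (Real.log C - 4) := hfinal
    _ ≤ bcPhi β lam p - 0 := by linarith
    _ ≤ bcPhi β lam p - sInf (bcPhi β lam '' bcSimplex) := by linarith
end
end
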